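/- Let $A_0 \in \mathbb{R}^{n\times n}$ be invertible with Jordan form $A_0 = V \begin{pmatrix} I_m & 0 \\ 0 & U \end{pmatrix} V^{-1}$ where $1$ is not an eigenvalue of $U$, and let $A_1 \in \mathbb{R}^{n\times n}$ be invertible. Define $E(\varepsilon) = V \begin{pmatrix} \varepsilon^{-1} I_m & 0 \\ 0 & I_{n-m} \end{pmatrix} V^{-1}$ for $\varepsilon \neq 0$. Then there exists $\delta > 0$ such that for all $0 < |\varepsilon| < \delta$, the matrix $E(\varepsilon)\,(A_0 + \varepsilon A_1 - I_n)$ is invertible. -/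

import Mathlib

/-!
For `ε ≠ 0` the factor `E ε` is a product of invertible matrices. The other factor is
`A₀ + ε A₁ - 1 = A₁ (ε • 1 + A₁⁻¹ (A₀ - 1))`, whose determinant is `det A₁` times the
characteristic polynomial of `-A₁⁻¹ (A₀ - 1)` evaluated at `ε`. That polynomial is monic, so it
has finitely many roots, and a punctured neighbourhood of `0` avoids them all.
-/

open Matrix Polynomial Filter Topology

theorem Matrix.finite_setOfPred_det_add_smul_eq_zero {n K : Type*} [Fintype n] [DecidableEq n]
    [CommRing K] [IsDomain K] (A : Matrix n n K) {B : Matrix n n K} (hB : IsUnit B) :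
    {t : K | (A + t • B).det = 0}.Finite := by
  have hBdet : IsUnit B.det := (isUnit_iff_isUnit_det B).mp hB
  refine (finite_setOfPred_isRoot (charpoly_monic (-(B⁻¹ * A))).ne_zero).subset fun t ht => ?_
  have hfactor : A + t • B = B * (scalar n t - -(B⁻¹ * A)) := by
    rw [sub_neg_eq_add, mul_add, ← mul_assoc, mul_nonsing_inv B hBdet, one_mul, add_comm]
    simp [scalar_apply, ← smul_one_eq_diagonal]
  rw [Set.mem_ofPred_eq, hfactor, det_mul, hBdet.mul_right_eq_zero] at ht
  simpa [eval_charpoly] using ht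

theorem Matrix.eventually_cofinite_isUnit_add_smul {n K : Type*} [Fintype n] [DecidableEq n]
    [Field K] (A : Matrix n n K) {B : Matrix n n K} (hB : IsUnit B) :
    ∀ᶠ t : K in cofinite, IsUnit (A + t • B) := by
  refine eventually_cofinite.mpr <|
    (finite_setOfPred_det_add_smul_eq_zero A hB).subset fun t ht => ?_
  by_contra hdet
  exact ht ((isUnit_iff_isUnit_det _).mpr (isUnit_iff_ne_zero.mpr hdet))

theorem Real.exists_pos_forall_of_eventually_nhdsNE {p : ℝ → Prop} (h : ∀ᶠ t in 𝓝[≠] 0, p t) :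
    ∃ δ > 0, ∀ t, 0 < |t| → |t| < δ → p t := by
  obtain ⟨δ, hδ, hball⟩ := Metric.mem_nhdsWithin_iff.mp h
  exact ⟨δ, hδ, fun t ht htδ => hball ⟨by simpa using htδ, by simpa [abs_pos] using ht⟩⟩

theorem nearby_fixed_points_full_rank_general
    (m k : ℕ)
    (V A₁ : Matrix (Fin m ⊕ Fin k) (Fin m ⊕ Fin k) ℝ)
    (hV : IsUnit V)
    (hA₁ : IsUnit A₁)
    (A₀ : Matrix (Fin m ⊕ Fin k) (Fin m ⊕ Fin k) ℝ)
    (E : ℝ → Matrix (Fin m ⊕ Fin k) (Fin m ⊕ Fin k) ℝ)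
    (hE : ∀ ε : ℝ, ε ≠ 0 → E ε = V * fromBlocks (ε⁻¹ • 1) 0 0 1 * V⁻¹) :
    ∃ δ > 0, ∀ ε : ℝ, 0 < |ε| → |ε| < δ →
      IsUnit (E ε * (A₀ + ε • A₁ - 1)) := by
  obtain ⟨δ, hδ, hunit⟩ := Real.exists_pos_forall_of_eventually_nhdsNE <|
    nhdsNE_le_cofinite (0 : ℝ) (eventually_cofinite_isUnit_add_smul (A₀ - 1) hA₁)
  refine ⟨δ, hδ, fun ε hε hεδ => ?_⟩
  have hε0 : ε ≠ 0 := abs_pos.mp hε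
  have hEunit : IsUnit (E ε) := by
    rw [hE ε hε0]
    refine (hV.mul (isUnit_fromBlocks_zero₂₁.mpr ⟨?_, isUnit_one⟩)).mul
      (isUnit_nonsing_inv_iff.mpr hV)
    exact isUnit_one.smul (Units.mk0 ε⁻¹ (inv_ne_zero hε0))
  rw [show A₀ + ε • A₁ - 1 = A₀ - 1 + ε • A₁ by abel]
  exact hEunit.mul (hunit ε hε hεδ)

/-- If `A₀ = V·diag(Iₘ, U)·V⁻¹` with `1` not an eigenvalue of `U`, `A₁` invertible,
and `E(ε) = V·diag(ε⁻¹Iₘ, I)·V⁻¹`, then `E(ε)(A₀ + εA₁ - I)` is invertible for all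
sufficiently small `ε ≠ 0`. -/
theorem nearby_fixed_points_full_rank
    (m k : ℕ)
    (V A₁ : Matrix (Fin m ⊕ Fin k) (Fin m ⊕ Fin k) ℝ)
    (U : Matrix (Fin k) (Fin k) ℝ)
    (hV : IsUnit V)
    (hU : IsUnit (U - 1))
    (hA₁ : IsUnit A₁)
    (A₀ : Matrix (Fin m ⊕ Fin k) (Fin m ⊕ Fin k) ℝ)
    (hA₀ : A₀ = V * fromBlocks 1 0 0 U * V⁻¹)
    (E : ℝ → Matrix (Fin m ⊕ Fin k) (Fin m ⊕ Fin k) ℝ)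
    (hE : ∀ ε : ℝ, ε ≠ 0 → E ε = V * fromBlocks (ε⁻¹ • 1) 0 0 1 * V⁻¹) :
    ∃ δ > 0, ∀ ε : ℝ, 0 < |ε| → |ε| < δ →
      IsUnit (E ε * (A₀ + ε • A₁ - 1)) :=
  nearby_fixed_points_full_rank_general m k V A₁ hV hA₁ A₀ E hE
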